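/- arXiv:2001.03040 — 2 statements merged into one kernel-verified Lean document; each statement's English description precedes it below -/
import Mathlib

section
/- For any N_1, N_2 ∈ ℕ+, given N_1(N_2+1) + 1 samples (x_i, y_i) ∈ ℝ² with x_0 < x_1 < ⋯ < x_{N_1(N_2+1)} and y_i ≥ 0 for all i, there exists a function φ : ℝ → ℝ implemented by a ReLU FNN with exactly two hidden layers, of widths 2N_1 and 2N_2+1 respectively, such that: (1) φ(x_i) = y_i for every i = 0, 1, …, N_1(N_2+1); and (2) φ is affine on each interval [x_{i−1}, x_i] for every i ∈ {1, …, N_1(N_2+1)} that does not lie in the set {(N_2+1)j : j = 1, 2, …, N_1}. -/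
/-!
Split the samples into `N₁` blocks of `N₂ + 1` consecutive points, the last sample being left over.
On block `J` the linear interpolant is `y₀ + ∑ₖ cₖ ReLU(t - xₖ)` with `N₂` kinks, and the identities
`c ReLU(v) = ReLU(c⁺ v) - ReLU(c⁻ v)` and `y₀ = ReLU(y₀)` for `y₀ ≥ 0` turn it into a
signed sum of `2N₂ + 1` ReLUs of affine functions of `t`. The second hidden layer has one unit for
each of them, whose input must agree with the corresponding affine function on every block. A
single hidden layer of `2N₁` neurons achieves this, interpolating linearly across the `N₁` gaps
between consecutive blocks and up to the last sample. Off these gaps the output is affine.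
-/

open Real

noncomputable section

/-- `A` is an affine map from `ℝ^m` to `ℝ^n`. -/
def IsAffineMap (m n : ℕ) (A : (Fin m → ℝ) → (Fin n → ℝ)) : Prop :=
  ∃ (M : Matrix (Fin n) (Fin m) ℝ) (b : Fin n → ℝ), ∀ x, A x = M.mulVec x + b

/-- `φ : ℝ^d → ℝ` is realized by a ReLU network with exactly `L'` hidden layers,
each of positive width at most `W`. -/
def ReLUNetRec (W : ℝ) : ℕ → ∀ d : ℕ, ((Fin d → ℝ) → ℝ) → Prop
  | 0, d, φ => ∃ A : (Fin d → ℝ) → (Fin 1 → ℝ), IsAffineMap d 1 A ∧ ∀ x, φ x = A x 0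
  | L' + 1, d, φ => ∃ n : ℕ, 0 < n ∧ (n : ℝ) ≤ W ∧
      ∃ A : (Fin d → ℝ) → (Fin n → ℝ), IsAffineMap d n A ∧
        ∃ ψ : (Fin n → ℝ) → ℝ, ReLUNetRec W L' n ψ ∧
          ∀ x, φ x = ψ (fun i => max (A x i) 0)

/-- `φ : ℝ^d → ℝ` is implemented by a ReLU FNN with width at most `W` and depth at most `D`. -/
def ImplementedBy (d : ℕ) (W D : ℝ) (φ : (Fin d → ℝ) → ℝ) : Prop :=
  ∃ L' : ℕ, (L' : ℝ) ≤ D ∧ ReLUNetRec W L' d φ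

/-- one-dimensional-input version of `ImplementedBy`. -/
def ImplementedBy1 (W D : ℝ) (φ : ℝ → ℝ) : Prop :=
  ImplementedBy 1 W D (fun x => φ (x 0))

/-- two-dimensional-input version of `ImplementedBy`. -/
def ImplementedBy2 (W D : ℝ) (φ : ℝ → ℝ → ℝ) : Prop :=
  ImplementedBy 2 W D (fun x => φ (x 0) (x 1))

/-- `φ : ℝ^d → ℝ` is implemented by a ReLU FNN with exactly two hidden layers,
of widths `w₁` and `w₂` respectively. -/
def TwoHiddenLayerNet (d w₁ w₂ : ℕ) (φ : (Fin d → ℝ) → ℝ) : Prop :=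
  ∃ (A₀ : (Fin d → ℝ) → (Fin w₁ → ℝ)) (A₁ : (Fin w₁ → ℝ) → (Fin w₂ → ℝ))
    (A₂ : (Fin w₂ → ℝ) → (Fin 1 → ℝ)),
    IsAffineMap d w₁ A₀ ∧ IsAffineMap w₁ w₂ A₁ ∧ IsAffineMap w₂ 1 A₂ ∧
    ∀ x, φ x = A₂ (fun j => max (A₁ (fun i => max (A₀ x i) 0) j) 0) 0

namespace ReluInterp

open Finset

variable (Q V : ℕ → ℝ)

def knotSlope (k : ℕ) : ℝ := (V (k + 1) - V k) / (Q (k + 1) - Q k)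

def kinkCoeff : ℕ → ℝ
  | 0 => knotSlope Q V 0
  | k + 1 => knotSlope Q V (k + 1) - knotSlope Q V k

/-- The continuous piecewise linear function through the points `(Q k, V k)`, `k ≤ n`, continued
with slope `s` to the left of `Q 0` and with the last slope to the right of `Q n`, written as a
one-hidden-layer ReLU network with `n + 1` neurons. -/
def reluInterp (s : ℝ) (n : ℕ) (t : ℝ) : ℝ :=
  V 0 - s * max (Q 0 - t) 0 + ∑ k ∈ range n, kinkCoeff Q V k * max (t - Q k) 0

variable {Q V}

lemma add_knotSlope_mul {k : ℕ} (hQ : Q k ≠ Q (k + 1)) :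
    V k + knotSlope Q V k * (Q (k + 1) - Q k) = V (k + 1) := by
  rw [knotSlope, div_mul_cancel₀ _ (sub_ne_zero.mpr hQ.symm)]
  ring

lemma add_sum_kinkCoeff_mul {k : ℕ} (hQ : ∀ j < k, Q j ≠ Q (j + 1)) (t : ℝ) :
    V 0 + ∑ j ∈ range (k + 1), kinkCoeff Q V j * (t - Q j) =
      V k + knotSlope Q V k * (t - Q k) := by
  induction k with
  | zero => simp [kinkCoeff]
  | succ k ih =>
    rw [sum_range_succ, ← add_assoc, ih fun j hj => hQ j (by omega), kinkCoeff,
      ← add_knotSlope_mul (V := V) (hQ k k.lt_succ_self)]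
    ring

variable {s : ℝ} {n : ℕ}

lemma reluInterp_of_le (hQ : MonotoneOn Q (Set.Iic n)) {t : ℝ} (ht : t ≤ Q 0) :
    reluInterp Q V s n t = V 0 + s * (t - Q 0) := by
  have hkinks : ∀ k ∈ range n, kinkCoeff Q V k * max (t - Q k) 0 = 0 := fun k hk => by
    have : Q 0 ≤ Q k := hQ (by simp) (by simp at hk ⊢; omega) (Nat.zero_le k)
    rw [max_eq_right (by linarith), mul_zero]
  rw [reluInterp, sum_eq_zero hkinks, max_eq_left (by linarith)]
  ring

lemma reluInterp_of_mem_Icc (hQ : StrictMonoOn Q (Set.Iic n)) {k : ℕ} (hk : k < n) {t : ℝ}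
    (ht : t ∈ Set.Icc (Q k) (Q (k + 1))) :
    reluInterp Q V s n t = V k + knotSlope Q V k * (t - Q k) := by
  have hmem : ∀ {j}, j ≤ n → j ∈ Set.Iic n := id
  have hleft : max (Q 0 - t) 0 = 0 :=
    max_eq_right (by linarith [ht.1, hQ.monotoneOn (hmem (Nat.zero_le n)) (hmem hk.le) k.zero_le])
  have hactive : ∀ j ∈ range (k + 1), kinkCoeff Q V j * max (t - Q j) 0
      = kinkCoeff Q V j * (t - Q j) := fun j hj => by
    have : Q j ≤ Q k := hQ.monotoneOn (hmem (by simp at hj; omega)) (hmem hk.le)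
      (Nat.lt_succ_iff.mp (mem_range.mp hj))
    rw [max_eq_left (by linarith [ht.1])]
  have hinactive : ∀ j ∈ Ico (k + 1) n, kinkCoeff Q V j * max (t - Q j) 0 = 0 := fun j hj => by
    have : Q (k + 1) ≤ Q j :=
      hQ.monotoneOn (hmem hk) (hmem (by simp at hj; omega)) (mem_Ico.mp hj).1
    rw [max_eq_right (by linarith [ht.2]), mul_zero]
  rw [reluInterp, hleft, mul_zero, sub_zero, ← sum_range_add_sum_Ico _ hk, sum_eq_zero hinactive,
    add_zero, sum_congr rfl hactive]
  exact add_sum_kinkCoeff_mul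
    (fun j hj => (hQ (hmem (by omega)) (hmem (by omega)) j.lt_succ_self).ne) t

lemma reluInterp_knot (hQ : StrictMonoOn Q (Set.Iic n)) {k : ℕ} (hk : k ≤ n) :
    reluInterp Q V s n (Q k) = V k := by
  cases k with
  | zero => simp [reluInterp_of_le hQ.monotoneOn le_rfl]
  | succ k =>
    have hlt : Q k < Q (k + 1) := hQ (by simp; omega) (by simpa using hk) k.lt_succ_self
    rw [reluInterp_of_mem_Icc hQ hk ⟨hlt.le, le_rfl⟩, add_knotSlope_mul hlt.ne]

lemma reluInterp_eq_of_le {g : ℝ → ℝ} {b : ℝ} (hg : ∀ t, g t = s * t + b)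
    (hQ : MonotoneOn Q (Set.Iic n)) (hV : V 0 = g (Q 0)) {t : ℝ} (ht : t ≤ Q 0) :
    reluInterp Q V s n t = g t := by
  rw [reluInterp_of_le hQ ht, hV, hg, hg]
  ring

lemma reluInterp_eq_of_mem_Icc {g : ℝ → ℝ} {a b : ℝ} (hg : ∀ t, g t = a * t + b)
    (hQ : StrictMonoOn Q (Set.Iic n)) {k : ℕ} (hk : k < n)
    (hVk : V k = g (Q k)) (hVk' : V (k + 1) = g (Q (k + 1))) {t : ℝ}
    (ht : t ∈ Set.Icc (Q k) (Q (k + 1))) :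
    reluInterp Q V s n t = g t := by
  have hne : Q (k + 1) - Q k ≠ 0 :=
    sub_ne_zero.mpr (hQ (by simp; omega) (by simpa using hk) k.lt_succ_self).ne'
  have hslope : knotSlope Q V k = a := by
    rw [knotSlope, hVk, hVk', hg, hg, div_eq_iff hne]
    ring
  rw [reluInterp_of_mem_Icc hQ hk ht, hslope, hVk, hg, hg]
  ring

lemma reluInterp_eq_sum (s : ℝ) (n : ℕ) (t : ℝ) :
    reluInterp Q V s n t = V 0 + ∑ i ∈ range (n + 1),
      (if i = 0 then -s else kinkCoeff Q V (i - 1)) *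
        max ((if i = 0 then -1 else 1) * t + (if i = 0 then Q 0 else -Q (i - 1))) 0 := by
  rw [sum_range_succ', reluInterp]
  simp only [if_pos, Nat.succ_ne_zero, if_false, Nat.add_sub_cancel, one_mul]
  simp only [← sub_eq_add_neg, neg_one_mul, neg_add_eq_sub]
  ring

end ReluInterp

open Finset ReluInterp

lemma twoHiddenLayerNet_of_eq_sum {w₁ w₂ : ℕ} (a b : ℕ → ℝ) (W : ℕ → ℕ → ℝ) (c d : ℕ → ℝ)
    {φ : ℝ → ℝ} (hφ : ∀ t, φ t = ∑ j ∈ range w₂,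
      d j * max (c j + ∑ i ∈ range w₁, W j i * max (a i * t + b i) 0) 0) :
    TwoHiddenLayerNet 1 w₁ w₂ (fun v => φ (v 0)) := by
  refine ⟨fun v i => a i * v 0 + b i, fun u j => c j + ∑ i : Fin w₁, W j i * u i,
    fun z _ => ∑ j : Fin w₂, d j * z j, ⟨fun i _ => a i, fun i => b i, fun v => ?_⟩,
    ⟨Matrix.of fun j i => W j i, fun j => c j, fun u => ?_⟩, ⟨fun _ j => d j, 0, fun z => ?_⟩,
    fun v => ?_⟩
  · ext i
    simp [Matrix.mulVec, dotProduct]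
  · ext j
    simp [Matrix.mulVec, dotProduct, add_comm]
  · ext
    simp [Matrix.mulVec, dotProduct]
  · show φ (v 0) =
      ∑ j : Fin w₂, d j * max (c j + ∑ i : Fin w₁, W j i * max (a i * v 0 + b i) 0) 0
    simp only [hφ, ← Fin.sum_univ_eq_sum_range]

lemma sum_range_two_mul {M : Type*} [AddCommMonoid M] (f : ℕ → M) (n : ℕ) :
    ∑ i ∈ range (2 * n), f i = ∑ k ∈ range n, (f (2 * k) + f (2 * k + 1)) := by
  induction n with
  | zero => simp
  | succ n ih =>
    rw [Nat.mul_succ, sum_range_succ, sum_range_succ, sum_range_succ _ n, ih, add_assoc]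

lemma max_pos_mul_sub_max_neg_mul (c v : ℝ) :
    max (max c 0 * v) 0 - max (max (-c) 0 * v) 0 = c * max v 0 := by
  have hscale : ∀ a : ℝ, 0 ≤ a → max (a * v) 0 = a * max v 0 := fun a ha => by
    rw [mul_max_of_nonneg _ _ ha, mul_zero]
  rw [hscale _ (le_max_right _ _), hscale _ (le_max_right _ _), ← sub_mul,
    max_zero_sub_max_neg_zero_eq_self]

namespace PointFitting

variable (N₁ N₂ : ℕ) (x y : ℕ → ℝ)

def blockSeq (f : ℕ → ℝ) (J k : ℕ) : ℝ := f (J * (N₂ + 1) + k)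

def blockInterp (J : ℕ) : ℝ → ℝ := reluInterp (blockSeq N₂ x J) (blockSeq N₂ y J) 0 N₂

def unitSlope (J m : ℕ) : ℝ :=
  if m < 2 * N₂ then max ((-1) ^ m * kinkCoeff (blockSeq N₂ x J) (blockSeq N₂ y J) (m / 2)) 0
  else 0

/-- On block `J` the `m`-th second-layer unit has to compute `unitFn J m`: units `2k` and `2k + 1`
carry the positive and the negative part of the kink of `blockInterp J` at its `k`-th knot, and
unit `2 N₂` carries its value at the first knot. -/
def unitFn (J m : ℕ) (t : ℝ) : ℝ :=
  unitSlope N₂ x y J m * (t - blockSeq N₂ x J (m / 2)) +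
    if m < 2 * N₂ then 0 else y (J * (N₂ + 1))

/-- `gapKnot (2 j)` is the last sample of block `j` and `gapKnot (2 j + 1)` the first sample of
block `j + 1`; `gapKnot (2 N₁ - 1)` is the last sample. -/
def gapKnot (i : ℕ) : ℝ := x (i / 2 * (N₂ + 1) + N₂ + i % 2)

def gapVal (m i : ℕ) : ℝ :=
  if i % 2 = 0 then unitFn N₂ x y (i / 2) m (gapKnot N₂ x i)
  else if i / 2 + 1 < N₁ then unitFn N₂ x y (i / 2 + 1) m (gapKnot N₂ x i)
  else if m < 2 * N₂ then 0 else y (N₁ * (N₂ + 1))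

/-- The input of the `m`-th second-layer unit: `unitFn J m` on each block `J`, linear across the
gaps between blocks, and at the last sample `0` unless `m` is the constant unit. -/
def unitPre (m : ℕ) : ℝ → ℝ :=
  reluInterp (gapKnot N₂ x) (gapVal N₁ N₂ x y m) (unitSlope N₂ x y 0 m) (2 * N₁ - 1)

def fitNet (t : ℝ) : ℝ := ∑ m ∈ range (2 * N₂ + 1), (-1) ^ m * max (unitPre N₁ N₂ x y m t) 0

variable {N₁ N₂ x y}

lemma exists_block_index {i : ℕ} (hi : i < N₁ * (N₂ + 1)) :
    ∃ J r, J < N₁ ∧ r ≤ N₂ ∧ i = J * (N₂ + 1) + r :=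
  ⟨i / (N₂ + 1), i % (N₂ + 1), (Nat.div_lt_iff_lt_mul N₂.succ_pos).mpr hi,
    Nat.lt_succ_iff.mp (Nat.mod_lt _ N₂.succ_pos), (Nat.div_add_mod' i (N₂ + 1)).symm⟩

lemma block_end_lt {J : ℕ} (hJ : J < N₁) : J * (N₂ + 1) + N₂ < N₁ * (N₂ + 1) := by
  nlinarith

lemma strictMonoOn_blockSeq (hx : StrictMonoOn x (Set.Iic (N₁ * (N₂ + 1)))) {J : ℕ}
    (hJ : J < N₁) : StrictMonoOn (blockSeq N₂ x J) (Set.Iic N₂) := fun k hk l hl hkl => by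
  have := block_end_lt (N₂ := N₂) hJ
  simp only [Set.mem_Iic] at hk hl
  exact hx (Set.mem_Iic.mpr (by omega)) (Set.mem_Iic.mpr (by omega)) (by omega)

lemma sum_unitFn {J : ℕ} (hy : 0 ≤ y (J * (N₂ + 1))) (t : ℝ) :
    ∑ m ∈ range (2 * N₂ + 1), (-1) ^ m * max (unitFn N₂ x y J m t) 0 =
      blockInterp N₂ x y J t := by
  have hpair : ∀ k ∈ range N₂, (-1) ^ (2 * k) * max (unitFn N₂ x y J (2 * k) t) 0
      + (-1) ^ (2 * k + 1) * max (unitFn N₂ x y J (2 * k + 1) t) 0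
      = kinkCoeff (blockSeq N₂ x J) (blockSeq N₂ y J) k * max (t - blockSeq N₂ x J k) 0 := by
    intro k hk
    have hk : k < N₂ := mem_range.mp hk
    have heven : (-1 : ℝ) ^ (2 * k) = 1 := by simp [pow_mul]
    have hodd : (-1 : ℝ) ^ (2 * k + 1) = -1 := by simp [pow_succ, pow_mul]
    simp only [unitFn, unitSlope, if_pos (show 2 * k < 2 * N₂ by omega),
      if_pos (show 2 * k + 1 < 2 * N₂ by omega), show (2 * k + 1) / 2 = k by omega,
      show 2 * k / 2 = k by omega, heven, hodd, one_mul, neg_one_mul, add_zero, ← sub_eq_add_neg]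
    exact max_pos_mul_sub_max_neg_mul _ _
  rw [sum_range_succ, sum_range_two_mul, sum_congr rfl hpair, blockInterp, reluInterp]
  simp [unitFn, unitSlope, max_eq_left hy, blockSeq, add_comm]

lemma unitFn_eq (J m : ℕ) (t : ℝ) :
    unitFn N₂ x y J m t = unitSlope N₂ x y J m * t + unitFn N₂ x y J m 0 := by
  simp only [unitFn]
  ring

lemma gapKnot_two_mul (j : ℕ) : gapKnot N₂ x (2 * j) = x (j * (N₂ + 1) + N₂) := by
  simp [gapKnot]

lemma gapKnot_two_mul_add_one (j : ℕ) :
    gapKnot N₂ x (2 * j + 1) = x ((j + 1) * (N₂ + 1)) := by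
  simp only [gapKnot, show (2 * j + 1) / 2 = j by omega, show (2 * j + 1) % 2 = 1 by omega]
  ring_nf

lemma strictMonoOn_gapKnot (hN₂ : 0 < N₂) (hx : StrictMonoOn x (Set.Iic (N₁ * (N₂ + 1)))) :
    StrictMonoOn (gapKnot N₂ x) (Set.Iic (2 * N₁ - 1)) := by
  refine strictMonoOn_Iic_of_lt_succ fun i hi => ?_
  obtain ⟨j, rfl | rfl⟩ := Nat.even_or_odd' i
  · have := block_end_lt (N₂ := N₂) (show j < N₁ by omega)
    rw [Order.succ_eq_add_one, gapKnot_two_mul, gapKnot_two_mul_add_one]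
    exact hx (Set.mem_Iic.mpr (by omega)) (Set.mem_Iic.mpr (by linarith)) (by linarith)
  · have := block_end_lt (N₂ := N₂) (show j + 1 < N₁ by omega)
    rw [Order.succ_eq_add_one, show 2 * j + 1 + 1 = 2 * (j + 1) by ring, gapKnot_two_mul,
      gapKnot_two_mul_add_one]
    exact hx (Set.mem_Iic.mpr (by omega)) (Set.mem_Iic.mpr (by omega)) (by omega)

lemma unitPre_of_mem_block (hN₂ : 0 < N₂) (hx : StrictMonoOn x (Set.Iic (N₁ * (N₂ + 1))))
    {J : ℕ} (hJ : J < N₁) (m : ℕ) {t : ℝ}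
    (ht : t ∈ Set.Icc (x (J * (N₂ + 1))) (x (J * (N₂ + 1) + N₂))) :
    unitPre N₁ N₂ x y m t = unitFn N₂ x y J m t := by
  have hQ := strictMonoOn_gapKnot hN₂ hx
  cases J with
  | zero =>
    refine reluInterp_eq_of_le (unitFn_eq 0 m) hQ.monotoneOn (by simp [gapVal]) ?_
    simpa [gapKnot] using ht.2
  | succ j =>
    refine reluInterp_eq_of_mem_Icc (unitFn_eq (j + 1) m) hQ (k := 2 * j + 1) (by omega)
      ?_ ?_ ?_
    · simp [gapVal, show (2 * j + 1) / 2 = j by omega, hJ]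
    · simp [gapVal, show 2 * j + 1 + 1 = 2 * (j + 1) by ring]
    · rwa [show 2 * j + 1 + 1 = 2 * (j + 1) by ring, gapKnot_two_mul, gapKnot_two_mul_add_one]

lemma unitPre_last (hN₁ : 0 < N₁) (hN₂ : 0 < N₂)
    (hx : StrictMonoOn x (Set.Iic (N₁ * (N₂ + 1)))) (m : ℕ) :
    unitPre N₁ N₂ x y m (x (N₁ * (N₂ + 1))) = if m < 2 * N₂ then 0 else y (N₁ * (N₂ + 1)) := by
  obtain ⟨j, rfl⟩ : ∃ j, N₁ = j + 1 := ⟨N₁ - 1, by omega⟩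
  have hknot : gapKnot N₂ x (2 * (j + 1) - 1) = x ((j + 1) * (N₂ + 1)) := by
    rw [show 2 * (j + 1) - 1 = 2 * j + 1 by omega, gapKnot_two_mul_add_one]
  rw [unitPre, ← hknot, reluInterp_knot (strictMonoOn_gapKnot hN₂ hx) le_rfl, gapVal,
    show 2 * (j + 1) - 1 = 2 * j + 1 by omega]
  simp [show (2 * j + 1) / 2 = j by omega]

lemma Icc_blockSeq_subset (hx : StrictMonoOn x (Set.Iic (N₁ * (N₂ + 1)))) {J : ℕ}
    (hJ : J < N₁) {r s : ℕ} (hr : r ≤ N₂) (hs : s ≤ N₂) :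
    Set.Icc (blockSeq N₂ x J r) (blockSeq N₂ x J s) ⊆
      Set.Icc (x (J * (N₂ + 1))) (x (J * (N₂ + 1) + N₂)) :=
  have hmono := (strictMonoOn_blockSeq hx hJ).monotoneOn
  Set.Icc_subset_Icc (hmono (Set.mem_Iic.mpr N₂.zero_le) hr r.zero_le)
    (hmono hs (Set.mem_Iic.mpr le_rfl) hs)

lemma fitNet_of_mem_block (hN₂ : 0 < N₂) (hx : StrictMonoOn x (Set.Iic (N₁ * (N₂ + 1))))
    {J : ℕ} (hJ : J < N₁) (hy : 0 ≤ y (J * (N₂ + 1))) {t : ℝ}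
    (ht : t ∈ Set.Icc (x (J * (N₂ + 1))) (x (J * (N₂ + 1) + N₂))) :
    fitNet N₁ N₂ x y t = blockInterp N₂ x y J t := by
  rw [← sum_unitFn hy, fitNet]
  exact sum_congr rfl fun m _ => by rw [unitPre_of_mem_block hN₂ hx hJ m ht]

lemma fitNet_last (hN₁ : 0 < N₁) (hN₂ : 0 < N₂)
    (hx : StrictMonoOn x (Set.Iic (N₁ * (N₂ + 1)))) (hy : 0 ≤ y (N₁ * (N₂ + 1))) :
    fitNet N₁ N₂ x y (x (N₁ * (N₂ + 1))) = y (N₁ * (N₂ + 1)) := by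
  simp only [fitNet, unitPre_last hN₁ hN₂ hx, sum_range_succ]
  rw [sum_eq_zero fun m hm => by simp [mem_range.mp hm]]
  simp [pow_mul, hy]

lemma twoHiddenLayerNet_fitNet (hN₁ : 0 < N₁) :
    TwoHiddenLayerNet 1 (2 * N₁) (2 * N₂ + 1) (fun v => fitNet N₁ N₂ x y (v 0)) := by
  refine twoHiddenLayerNet_of_eq_sum (fun i => if i = 0 then -1 else 1)
    (fun i => if i = 0 then gapKnot N₂ x 0 else -gapKnot N₂ x (i - 1))
    (fun m i => if i = 0 then -unitSlope N₂ x y 0 m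
      else kinkCoeff (gapKnot N₂ x) (gapVal N₁ N₂ x y m) (i - 1))
    (fun m => gapVal N₁ N₂ x y m 0) (fun m => (-1) ^ m) fun t => ?_
  simp only [fitNet, unitPre, reluInterp_eq_sum, Nat.sub_add_cancel (show 1 ≤ 2 * N₁ by omega)]

lemma fitNet_sample (hN₁ : 0 < N₁) (hN₂ : 0 < N₂)
    (hx : StrictMonoOn x (Set.Iic (N₁ * (N₂ + 1)))) (hy : ∀ i ≤ N₁ * (N₂ + 1), 0 ≤ y i) {i : ℕ}
    (hi : i ≤ N₁ * (N₂ + 1)) :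
    fitNet N₁ N₂ x y (x i) = y i := by
  rcases hi.lt_or_eq with hi | rfl
  · obtain ⟨J, r, hJ, hr, rfl⟩ := exists_block_index hi
    rw [fitNet_of_mem_block (t := x (J * (N₂ + 1) + r)) hN₂ hx hJ (hy _ (by omega))
      (Icc_blockSeq_subset hx hJ hr hr ⟨le_rfl, le_rfl⟩), blockInterp]
    exact reluInterp_knot (strictMonoOn_blockSeq hx hJ) hr
  · exact fitNet_last hN₁ hN₂ hx (hy _ le_rfl)

lemma exists_affine_fitNet (hN₂ : 0 < N₂) (hx : StrictMonoOn x (Set.Iic (N₁ * (N₂ + 1))))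
    (hy : ∀ i ≤ N₁ * (N₂ + 1), 0 ≤ y i) {i : ℕ} (hi₁ : 1 ≤ i) (hi : i ≤ N₁ * (N₂ + 1))
    (hgap : ∀ j, 1 ≤ j → j ≤ N₁ → i ≠ (N₂ + 1) * j) :
    ∃ a b : ℝ, ∀ t ∈ Set.Icc (x (i - 1)) (x i), fitNet N₁ N₂ x y t = a * t + b := by
  obtain ⟨J, r, hJ, hr, hi'⟩ :=
    exists_block_index (N₁ := N₁) (N₂ := N₂) (i := i - 1) (by omega)
  have hrN : r < N₂ := lt_of_le_of_ne hr fun hrN => hgap (J + 1) (by omega) (by omega) (by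
    rw [show i = J * (N₂ + 1) + N₂ + 1 by omega]
    ring)
  have hseg : Set.Icc (x (i - 1)) (x i) =
      Set.Icc (blockSeq N₂ x J r) (blockSeq N₂ x J (r + 1)) := by
    rw [hi', show i = J * (N₂ + 1) + (r + 1) by omega]
    rfl
  have := block_end_lt (N₂ := N₂) hJ
  set c := knotSlope (blockSeq N₂ x J) (blockSeq N₂ y J) r
  refine ⟨c, blockSeq N₂ y J r - c * blockSeq N₂ x J r, fun t ht => ?_⟩
  rw [hseg] at ht
  rw [fitNet_of_mem_block hN₂ hx hJ (hy _ (by omega)) (Icc_blockSeq_subset hx hJ hr hrN ht),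
    blockInterp, reluInterp_of_mem_Icc (strictMonoOn_blockSeq hx hJ) hrN ht]
  ring

end PointFitting

open PointFitting

/-- Lemma 5.4 (point fitting with two hidden layers): given `N₁(N₂+1)+1` samples with
strictly increasing first coordinates and nonnegative second coordinates, a ReLU FNN with
two hidden layers of widths `2N₁` and `2N₂+1` fits all samples exactly, and is affine on each
sample interval `[x_{i-1}, x_i]` whose index `i` is not a multiple `(N₂+1)j`, `1 ≤ j ≤ N₁`. -/
theorem two_layer_point_fitting
    (N₁ N₂ : ℕ) (hN₁ : 0 < N₁) (hN₂ : 0 < N₂)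
    (x y : ℕ → ℝ)
    (hx : ∀ i : ℕ, i < N₁ * (N₂ + 1) → x i < x (i + 1))
    (hy : ∀ i : ℕ, i ≤ N₁ * (N₂ + 1) → 0 ≤ y i) :
    ∃ φ : ℝ → ℝ,
      TwoHiddenLayerNet 1 (2 * N₁) (2 * N₂ + 1) (fun v => φ (v 0)) ∧
      (∀ i : ℕ, i ≤ N₁ * (N₂ + 1) → φ (x i) = y i) ∧
      (∀ i : ℕ, 1 ≤ i → i ≤ N₁ * (N₂ + 1) →
        (∀ j : ℕ, 1 ≤ j → j ≤ N₁ → i ≠ (N₂ + 1) * j) →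
        ∃ a b : ℝ, ∀ t ∈ Set.Icc (x (i - 1)) (x i), φ t = a * t + b) := by
  have hxs : StrictMonoOn x (Set.Iic (N₁ * (N₂ + 1))) :=
    strictMonoOn_Iic_of_lt_succ fun i hi => by simpa using hx i hi
  exact ⟨fitNet N₁ N₂ x y, twoHiddenLayerNet_fitNet hN₁,
    fun _ hi => fitNet_sample hN₁ hN₂ hxs hy hi,
    fun _ hi₁ hi hgap => exists_affine_fitNet hN₂ hxs hy hi₁ hi hgap⟩
end
end

section
/- For any N, L, d ∈ ℕ+, every function φ : ℝ^d → ℝ implemented by a ReLU FNN with exactly two hidden layers of widths N and NL respectively can also be implemented by a ReLU FNN with width at most 2N + 2 and depth at most L + 1. -/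
open Real

noncomputable section

namespace WD

lemma isAffine_coords {m n : ℕ} (A : (Fin m → ℝ) → (Fin n → ℝ))
    (h : ∀ i, ∃ c : Fin m → ℝ, ∃ β : ℝ, ∀ x, A x i = (∑ j, c j * x j) + β) :
    IsAffineMap m n A := by
  choose c β hc using h
  exact ⟨Matrix.of c, β, fun x => funext fun i => by
    simp [Matrix.mulVec, dotProduct, hc]⟩

abbrev n2 (N : ℕ) : ℕ := N + (N + 2)

def iy (N : ℕ) (i : Fin N) : Fin (n2 N) := Fin.castAdd (N+2) i
def it (N : ℕ) (i : Fin N) : Fin (n2 N) := Fin.natAdd N (Fin.castAdd 2 i)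
def iu (N : ℕ) : Fin (n2 N) := Fin.natAdd N (Fin.natAdd N 0)
def iv (N : ℕ) : Fin (n2 N) := Fin.natAdd N (Fin.natAdd N 1)

@[simp] lemma app3_iy {N : ℕ} (u : Fin N → ℝ) (v : Fin N → ℝ) (w : Fin 2 → ℝ) (i : Fin N) :
    Fin.append u (Fin.append v w) (iy N i) = u i := by
  simp [iy, Fin.append_left]

@[simp] lemma app3_it {N : ℕ} (u : Fin N → ℝ) (v : Fin N → ℝ) (w : Fin 2 → ℝ) (i : Fin N) :
    Fin.append u (Fin.append v w) (it N i) = v i := by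
  simp [it, Fin.append_right, Fin.append_left]

@[simp] lemma app3_iu {N : ℕ} (u : Fin N → ℝ) (v : Fin N → ℝ) (w : Fin 2 → ℝ) :
    Fin.append u (Fin.append v w) (iu N) = w 0 := by
  simp [iu, Fin.append_right]

@[simp] lemma app3_iv {N : ℕ} (u : Fin N → ℝ) (v : Fin N → ℝ) (w : Fin 2 → ℝ) :
    Fin.append u (Fin.append v w) (iv N) = w 1 := by
  simp [iv, Fin.append_right]

lemma dot3 {N : ℕ} (u : Fin N → ℝ) (v : Fin N → ℝ) (w : Fin 2 → ℝ) (z : Fin (n2 N) → ℝ) :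
    ∑ j, Fin.append u (Fin.append v w) j * z j
      = (∑ j, u j * z (iy N j)) + ((∑ j, v j * z (it N j))
        + (w 0 * z (iu N) + w 1 * z (iv N))) := by
  rw [Fin.sum_univ_add (f := fun j : Fin (N+(N+2)) => Fin.append u (Fin.append v w) j * z j)]
  congr 1
  · simp [iy, Fin.append_left]
  · rw [Fin.sum_univ_add (f := fun j : Fin (N+2) =>
      Fin.append u (Fin.append v w) (Fin.natAdd N j) * z (Fin.natAdd N j))]
    simp [it, iu, iv, Fin.append_left, Fin.append_right, Fin.sum_univ_two]


variable {N L : ℕ}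

def idx (N L : ℕ) (hL : 0 < L) (k : ℕ) (i : Fin N) : Fin (N*L) :=
  ⟨min k (L-1) * N + i.1, by
    have hi := i.isLt
    have hm : min k (L-1) + 1 ≤ L := by have := Nat.min_le_right k (L-1); omega
    have h2 : (min k (L-1) + 1) * N ≤ L * N := Nat.mul_le_mul_right _ hm
    have h3 : (min k (L-1) + 1) * N = min k (L-1) * N + N := by ring
    have h4 : L * N = N * L := Nat.mul_comm L N
    omega⟩

lemma idx_val (hL : 0 < L) {k : ℕ} (hk : k < L) (i : Fin N) :
    (idx N L hL k i).1 = k * N + i.1 := by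
  simp [idx, Nat.min_eq_left (by omega : k ≤ L - 1)]

/-- coefficient of neuron `i` in block `k` in the output layer -/
def av (hL : 0 < L) (a : Fin (N*L) → ℝ) (k : ℕ) (i : Fin N) : ℝ := a (idx N L hL k i)

/-- pre-activation of neuron `i` of block `k` of the second hidden layer -/
def Bf (hL : 0 < L) (M₁ : Matrix (Fin (N*L)) (Fin N) ℝ) (b₁ : Fin (N*L) → ℝ)
    (k : ℕ) (y : Fin N → ℝ) (i : Fin N) : ℝ :=
  (∑ j, M₁ (idx N L hL k i) j * y j) + b₁ (idx N L hL k i)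

def bsum (hL : 0 < L) (M₁ : Matrix (Fin (N*L)) (Fin N) ℝ) (b₁ a : Fin (N*L) → ℝ)
    (k : ℕ) (y : Fin N → ℝ) : ℝ :=
  ∑ i, av hL a k i * max (Bf hL M₁ b₁ k y i) 0

def Tm (hL : 0 < L) (M₁ : Matrix (Fin (N*L)) (Fin N) ℝ) (b₁ a : Fin (N*L) → ℝ) :
    ℕ → (Fin N → ℝ) → ℝ
  | 0, _ => 0
  | (m+1), y => bsum hL M₁ b₁ a (L-(m+1)) y + Tm hL M₁ b₁ a m y

def sfun (hL : 0 < L) (a : Fin (N*L) → ℝ) (k : ℕ) (z : Fin (n2 N) → ℝ) : ℝ :=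
  z (iu N) - z (iv N) + ∑ i, av hL a (k-1) i * z (it N i)

def Cmap (hL : 0 < L) (M₁ : Matrix (Fin (N*L)) (Fin N) ℝ) (b₁ a : Fin (N*L) → ℝ)
    (k : ℕ) (z : Fin (n2 N) → ℝ) : Fin (n2 N) → ℝ :=
  Fin.append (fun i => z (iy N i))
    (Fin.append (fun i => Bf hL M₁ b₁ k (fun j => z (iy N j)) i)
      ![sfun hL a k z, -(sfun hL a k z)])

def psi (hL : 0 < L) (M₁ : Matrix (Fin (N*L)) (Fin N) ℝ) (b₁ a : Fin (N*L) → ℝ) (c₀ : ℝ) :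
    ℕ → (Fin (n2 N) → ℝ) → ℝ
  | 0, z => c₀ + (z (iu N) - z (iv N)) + ∑ i, av hL a (L-1) i * z (it N i)
  | (m+1), z => psi hL M₁ b₁ a c₀ m (fun i => max (Cmap hL M₁ b₁ a (L-1-m) z i) 0)

lemma affine_C (hL : 0 < L) (M₁ : Matrix (Fin (N*L)) (Fin N) ℝ) (b₁ a : Fin (N*L) → ℝ)
    (k : ℕ) : IsAffineMap (n2 N) (n2 N) (Cmap hL M₁ b₁ a k) := by
  apply isAffine_coords
  intro i
  refine Fin.addCases (fun i => ?_) (fun i => Fin.addCases (fun i => ?_) (fun i => ?_) i) i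
  · -- y rows
    refine ⟨Fin.append (fun j => if j = i then 1 else 0)
      (Fin.append (fun _ => 0) ![0, 0]), 0, fun z => ?_⟩
    rw [dot3]
    have h1 : Cmap hL M₁ b₁ a k z (Fin.castAdd (N+2) i) = z (iy N i) := app3_iy _ _ _ i
    rw [h1]
    simp [Finset.sum_ite_eq']
  · -- t rows
    refine ⟨Fin.append (fun j => M₁ (idx N L hL k i) j)
      (Fin.append (fun _ => 0) ![0, 0]), b₁ (idx N L hL k i), fun z => ?_⟩
    rw [dot3]
    have h1 : Cmap hL M₁ b₁ a k z (Fin.natAdd N (Fin.castAdd 2 i))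
        = Bf hL M₁ b₁ k (fun j => z (iy N j)) i := app3_it _ _ _ i
    rw [h1]
    simp [Bf]
  · -- s rows
    refine Fin.cases ?_ (fun i => Fin.cases ?_ (fun i => i.elim0) i) i
    · refine ⟨Fin.append (fun _ => 0)
        (Fin.append (fun j => av hL a (k-1) j) ![1, -1]), 0, fun z => ?_⟩
      rw [dot3]
      have h1 : Cmap hL M₁ b₁ a k z (Fin.natAdd N (Fin.natAdd N 0))
          = sfun hL a k z := app3_iu _ _ _
      rw [h1]
      simp [sfun]
      ring
    · refine ⟨Fin.append (fun _ => 0)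
        (Fin.append (fun j => -(av hL a (k-1) j)) ![-1, 1]), 0, fun z => ?_⟩
      rw [dot3]
      have h1 : Cmap hL M₁ b₁ a k z (Fin.natAdd N (Fin.natAdd N 1))
          = -(sfun hL a k z) := app3_iv _ _ _
      rw [show (Fin.succ 0 : Fin 2) = 1 from rfl, h1]
      simp only [sfun, Matrix.cons_val_zero, Matrix.cons_val_one, Matrix.head_cons,
        zero_mul, Finset.sum_const_zero, neg_mul, Finset.sum_neg_distrib, add_zero, zero_add]
      ring

lemma psi_net (hN : 0 < N) (hL : 0 < L) (M₁ : Matrix (Fin (N*L)) (Fin N) ℝ)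
    (b₁ a : Fin (N*L) → ℝ) (c₀ : ℝ) :
    ∀ m, ReLUNetRec (2*(N:ℝ)+2) m (n2 N) (psi hL M₁ b₁ a c₀ m) := by
  intro m
  induction m with
  | zero =>
    refine ⟨fun z _ => psi hL M₁ b₁ a c₀ 0 z, ?_, fun z => rfl⟩
    apply isAffine_coords
    intro _
    refine ⟨Fin.append (fun _ => 0) (Fin.append (fun j => av hL a (L-1) j) ![1, -1]),
      c₀, fun z => ?_⟩
    rw [dot3]
    simp [psi]
    ring
  | succ m ih =>
    refine ⟨n2 N, ?_, ?_, Cmap hL M₁ b₁ a (L-1-m),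
      affine_C hL M₁ b₁ a _, psi hL M₁ b₁ a c₀ m, ih, fun z => rfl⟩
    · show 0 < N + (N + 2)
      omega
    · show ((N + (N + 2) : ℕ) : ℝ) ≤ 2*(N:ℝ)+2
      push_cast
      linarith

lemma psi_spec (hN : 0 < N) (hL : 0 < L) (M₁ : Matrix (Fin (N*L)) (Fin N) ℝ)
    (b₁ a : Fin (N*L) → ℝ) (c₀ : ℝ) :
    ∀ m (z : Fin (n2 N) → ℝ), (∀ i, 0 ≤ z (iy N i)) →
      psi hL M₁ b₁ a c₀ m z
        = c₀ + (z (iu N) - z (iv N)) + (∑ i, av hL a (L-m-1) i * z (it N i))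
          + Tm hL M₁ b₁ a m (fun j => z (iy N j)) := by
  intro m
  induction m with
  | zero => intro z hz; simp [psi, Tm]
  | succ m ih =>
    intro z hz
    have hC : ∀ i, Cmap hL M₁ b₁ a (L-1-m) z (iy N i) = z (iy N i) := fun i => app3_iy _ _ _ i
    set z' : Fin (n2 N) → ℝ := fun i => max (Cmap hL M₁ b₁ a (L-1-m) z i) 0 with hz'
    have hy' : ∀ i, z' (iy N i) = z (iy N i) := by
      intro i
      rw [hz']
      simp only [hC i]
      exact max_eq_left (hz i)
    have hpos : ∀ i, 0 ≤ z' (iy N i) := fun i => (hy' i).symm ▸ hz i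
    have hstep : psi hL M₁ b₁ a c₀ (m+1) z = psi hL M₁ b₁ a c₀ m z' := rfl
    rw [hstep, ih z' hpos]
    have hyfun : (fun j => z' (iy N j)) = (fun j => z (iy N j)) := funext hy'
    have ht' : ∀ i, z' (it N i)
        = max (Bf hL M₁ b₁ (L-1-m) (fun j => z (iy N j)) i) 0 := by
      intro i
      have e : Cmap hL M₁ b₁ a (L-1-m) z (it N i)
          = Bf hL M₁ b₁ (L-1-m) (fun j => z (iy N j)) i := app3_it _ _ _ i
      simp only [hz', e]
    have hu' : z' (iu N) = max (sfun hL a (L-1-m) z) 0 := by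
      have e : Cmap hL M₁ b₁ a (L-1-m) z (iu N) = sfun hL a (L-1-m) z := app3_iu _ _ _
      simp only [hz', e]
    have hv' : z' (iv N) = max (-(sfun hL a (L-1-m) z)) 0 := by
      have e : Cmap hL M₁ b₁ a (L-1-m) z (iv N) = -(sfun hL a (L-1-m) z) := app3_iv _ _ _
      simp only [hz', e]
    have huv : z' (iu N) - z' (iv N) = sfun hL a (L-1-m) z := by
      rw [hu', hv', max_zero_sub_max_neg_zero_eq_self]
    rw [hyfun, huv]
    have hTm : Tm hL M₁ b₁ a (m+1) (fun j => z (iy N j))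
        = bsum hL M₁ b₁ a (L-(m+1)) (fun j => z (iy N j))
          + Tm hL M₁ b₁ a m (fun j => z (iy N j)) := rfl
    rw [hTm]
    have e1 : L - m - 1 = L - 1 - m := by omega
    have e2 : L - (m+1) = L - 1 - m := by omega
    rw [e2]
    have hbs : (∑ i, av hL a (L-m-1) i * z' (it N i))
        = bsum hL M₁ b₁ a (L-1-m) (fun j => z (iy N j)) := by
      rw [e1, bsum]
      exact Finset.sum_congr rfl fun i _ => by rw [ht' i]
    rw [hbs]
    simp only [sfun]
    ring

lemma Tm_eq (hL : 0 < L) (M₁ : Matrix (Fin (N*L)) (Fin N) ℝ) (b₁ a : Fin (N*L) → ℝ)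
    (y : Fin N → ℝ) :
    ∀ m, m ≤ L → Tm hL M₁ b₁ a m y = ∑ k ∈ Finset.Ico (L-m) L, bsum hL M₁ b₁ a k y := by
  intro m
  induction m with
  | zero => intro _; simp [Tm]
  | succ m ih =>
    intro hm
    have h1 : Tm hL M₁ b₁ a (m+1) y = bsum hL M₁ b₁ a (L-(m+1)) y + Tm hL M₁ b₁ a m y := rfl
    rw [h1, ih (by omega)]
    rw [Finset.sum_eq_sum_Ico_succ_bot (show L-(m+1) < L by omega)]
    have e : L - (m+1) + 1 = L - m := by omega
    rw [e]

lemma sum_range_mul (g : ℕ → ℝ) (b : ℕ) :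
    ∀ a, ∑ j ∈ Finset.range (a*b), g j
      = ∑ k ∈ Finset.range a, ∑ i ∈ Finset.range b, g (k*b+i) := by
  intro a
  induction a with
  | zero => simp
  | succ a ih =>
    have e : (a+1)*b = a*b + b := by ring
    rw [e, Finset.range_eq_Ico,
      ← Finset.sum_Ico_consecutive _ (Nat.zero_le (a*b)) (Nat.le_add_right (a*b) b),
      ← Finset.range_eq_Ico, ih, Finset.sum_range_succ]
    congr 1
    rw [Finset.sum_Ico_eq_sum_range, show a*b + b - a*b = b by omega]

lemma sum_blocks (hN : 0 < N) (hL : 0 < L) (f : Fin (N*L) → ℝ) :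
    ∑ j, f j = ∑ k ∈ Finset.range L, ∑ i : Fin N, f (idx N L hL k i) := by
  set g : ℕ → ℝ := fun j => if h : j < N*L then f ⟨j, h⟩ else 0 with hg
  have h1 : ∑ j, f j = ∑ j ∈ Finset.range (N*L), g j := by
    rw [← Fin.sum_univ_eq_sum_range]
    refine Finset.sum_congr rfl fun i _ => ?_
    simp [hg, i.isLt]
  rw [h1, show N*L = L*N from Nat.mul_comm N L, sum_range_mul]
  refine Finset.sum_congr rfl fun k hk => ?_
  have hkL : k < L := Finset.mem_range.mp hk
  rw [← Fin.sum_univ_eq_sum_range (fun i => g (k*N+i))]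
  refine Finset.sum_congr rfl fun i _ => ?_
  have hlt : k*N + i.1 < N*L := by
    have := (idx N L hL k i).isLt
    rw [← idx_val hL hkL i] at *
    exact (idx N L hL k i).isLt
  simp only [hg]
  rw [dif_pos hlt]
  congr 1
  exact Fin.ext (by rw [idx_val hL hkL i])

end WD

/-- Lemma 5.5: any function computed by a ReLU FNN with two hidden layers of widths
`N` and `NL` can also be computed by a ReLU FNN of width `2N+2` and depth `L+1`. -/
theorem wide_to_deep
    (N L d : ℕ) (hN : 0 < N) (hL : 0 < L) (hd : 0 < d)
    (φ : (Fin d → ℝ) → ℝ) (h : TwoHiddenLayerNet d N (N * L) φ) :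
    ImplementedBy d (2 * (N : ℝ) + 2) ((L : ℝ) + 1) φ := by
  obtain ⟨A₀, A₁, A₂, hA₀, hA₁, hA₂, hφ⟩ := h
  obtain ⟨M₀, b₀, h₀⟩ := hA₀
  obtain ⟨M₁, b₁, h₁⟩ := hA₁
  obtain ⟨M₂, b₂, h₂⟩ := hA₂
  set a : Fin (N*L) → ℝ := fun j => M₂ 0 j with ha
  set c₀ : ℝ := b₂ 0 with hc₀
  refine ⟨L+1, by push_cast; linarith, ?_⟩
  refine ⟨WD.n2 N, by show 0 < N+(N+2); omega,
    by show ((N+(N+2) : ℕ) : ℝ) ≤ 2*(N:ℝ)+2; push_cast; linarith,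
    (fun x => Fin.append (A₀ x) (Fin.append (fun _ : Fin N => (0:ℝ)) ![0, 0])), ?_,
    WD.psi hL M₁ b₁ a c₀ L, WD.psi_net hN hL M₁ b₁ a c₀ L, ?_⟩
  · -- the first layer is affine
    apply WD.isAffine_coords
    intro i
    refine Fin.addCases (fun i => ?_) (fun i => ?_) i
    · refine ⟨fun j => M₀ i j, b₀ i, fun x => ?_⟩
      rw [Fin.append_left]
      rw [congrFun (h₀ x) i]
      simp [Matrix.mulVec, dotProduct]
    · refine ⟨fun _ => 0, 0, fun x => ?_⟩
      rw [Fin.append_right]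
      refine Fin.addCases (fun i => by simp) (fun i => ?_) i
      rw [Fin.append_right]
      fin_cases i <;> simp
  · -- correctness
    intro x
    set y : Fin N → ℝ := fun i => max (A₀ x i) 0 with hy
    set z : Fin (WD.n2 N) → ℝ :=
      fun i => max (Fin.append (A₀ x) (Fin.append (fun _ : Fin N => (0:ℝ)) ![0, 0]) i) 0
      with hzdef
    have hyz : ∀ i, z (WD.iy N i) = y i := by
      intro i
      simp only [hzdef, WD.app3_iy, hy]
    have hpos : ∀ i, 0 ≤ z (WD.iy N i) := by
      intro i; rw [hyz i]; exact le_max_right _ _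
    have htz : ∀ i, z (WD.it N i) = 0 := by
      intro i; simp only [hzdef, WD.app3_it]; simp
    have huz : z (WD.iu N) = 0 := by
      simp only [hzdef, WD.app3_iu]; simp
    have hvz : z (WD.iv N) = 0 := by
      simp only [hzdef, WD.app3_iv]; simp
    rw [WD.psi_spec hN hL M₁ b₁ a c₀ L z hpos]
    have hyfun : (fun j => z (WD.iy N j)) = y := funext hyz
    rw [hyfun, huz, hvz]
    simp only [htz, mul_zero, Finset.sum_const_zero, sub_zero, add_zero]
    have hT : WD.Tm hL M₁ b₁ a L y = ∑ k ∈ Finset.range L, WD.bsum hL M₁ b₁ a k y := by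
      rw [WD.Tm_eq hL M₁ b₁ a y L le_rfl]
      rw [show L - L = 0 by omega, ← Finset.range_eq_Ico]
    rw [hT]
    have hbs : ∀ k, WD.bsum hL M₁ b₁ a k y
        = ∑ i : Fin N, a (WD.idx N L hL k i)
            * max ((M₁.mulVec y + b₁) (WD.idx N L hL k i)) 0 := by
      intro k
      refine Finset.sum_congr rfl fun i _ => ?_
      simp [WD.av, WD.Bf, Matrix.mulVec, dotProduct]
    have hsum : ∑ k ∈ Finset.range L, WD.bsum hL M₁ b₁ a k y
        = ∑ j, a j * max ((M₁.mulVec y + b₁) j) 0 := by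
      rw [WD.sum_blocks hN hL (fun j => a j * max ((M₁.mulVec y + b₁) j) 0)]
      exact Finset.sum_congr rfl fun k _ => (hbs k)
    rw [hsum, hφ x, h₂, ← hy]
    have hA1 : (fun j => max (A₁ y j) 0) = fun j => max ((M₁.mulVec y + b₁) j) 0 := by
      rw [h₁ y]
    rw [hA1]
    simp [Matrix.mulVec, dotProduct, ha, hc₀]
    ring
end
end
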